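/- arXiv:1012.0504 — 4 statements merged into one kernel-verified Lean document; each statement's English description precedes it below -/
import Mathlib

section
/- For p ≥ 2, let K = p/(p−2) (so that for p > 2 the condition B_p(A) ≥ 0 for a 2×2 matrix A is equivalent to |A|² ≤ K·det A); then for every 2 ≤ q < 2K/(K−1) one has the pointwise bound B_q(A) ≥ |A|^q·(2K − q(K−1))/(2K) for every 2×2 matrix A with |A|² ≤ K·det A. -/
/-- The operator norm of a 2×2 real matrix, acting on Euclidean space. -/
noncomputable def opNorm (A : Matrix (Fin 2) (Fin 2) ℝ) : ℝ :=
  ‖LinearMap.toContinuousLinearMap (Matrix.toEuclideanLin A)‖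

/-- The Burkholder functional `B_q(A) = ((q/2)det A + (1 − q/2)|A|²)|A|^{q−2}`. -/
noncomputable def burkholderFn (q : ℝ) (A : Matrix (Fin 2) (Fin 2) ℝ) : ℝ :=
  ((q / 2) * A.det + (1 - q / 2) * opNorm A ^ 2) * opNorm A ^ (q - 2)

/-- Pointwise lower bound: if `A` satisfies the distortion inequality `|A|² ≤ K·det A`
(with `det A ≥ 0`, `K ≥ 1`), then for every `2 ≤ q < 2K/(K−1)` one has
`B_q(A) ≥ |A|^q·(2K − q(K−1))/(2K)`. -/
theorem burkholder_lower_bound (K : ℝ) (A : Matrix (Fin 2) (Fin 2) ℝ)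
    (hK : 1 ≤ K) (hdet : 0 ≤ A.det) (hdist : opNorm A ^ 2 ≤ K * A.det)
    (q : ℝ) (hq : 2 ≤ q) (hq' : q * (K - 1) < 2 * K) :
    opNorm A ^ q * ((2 * K - q * (K - 1)) / (2 * K)) ≤ burkholderFn q A := by
  unfold burkholderFn
  set N := opNorm A with hN
  have hN0 : 0 ≤ N := norm_nonneg _
  set d := A.det with hd
  have hKpos : (0:ℝ) < K := lt_of_lt_of_le one_pos hK
  rcases eq_or_lt_of_le hN0 with h0 | hpos
  · rw [← h0, Real.zero_rpow (by linarith : q ≠ 0)]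
    have h1 : (0:ℝ) ≤ (q / 2) * d + (1 - q / 2) * (0:ℝ) ^ 2 := by
      simp; positivity
    have h2 : (0:ℝ) ≤ (0:ℝ) ^ (q - 2) := Real.rpow_nonneg le_rfl _
    nlinarith
  · have hsplit : N ^ q = N ^ 2 * N ^ (q - 2) := by
      rw [← Real.rpow_natCast N 2, ← Real.rpow_add hpos]
      norm_num
    rw [hsplit, mul_comm (N ^ 2) (N ^ (q - 2)), mul_assoc, mul_comm]
    apply mul_le_mul_of_nonneg_right _ (Real.rpow_nonneg hN0 _)
    rw [mul_div_assoc', div_le_iff₀ (by linarith : (0:ℝ) < 2 * K)]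
    nlinarith [mul_le_mul_of_nonneg_left hdist (by linarith : (0:ℝ) ≤ q)]
end

section
/- Counterexample to interpolation without the non-vanishing condition: let g ∈ L¹(Ω,σ) with g ∉ L^p(Ω,σ) for every p > 1, and define Φ_λ(x) = ((1−λ)/(1+λ))·g(x) for Re λ > 0. Then {Φ_λ} is an analytic family, ‖Φ₁‖_∞ = 0, sup_{Re λ>0}‖Φ_λ‖₁ ≤ ‖g‖₁ < ∞, yet for 0 < θ < 1 the interpolated norm ‖Φ_θ‖_{p_θ} with 1/p_θ = 1−θ is infinite (since Φ_θ is a nonzero multiple of g and p_θ > 1). -/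
open MeasureTheory Complex
open scoped ENNReal

/-! The factor `(1 - λ) / (1 + λ)` is holomorphic off `-1` and has modulus at most `1` on the
right half-plane, which gives analyticity and the uniform `L¹` bound. It vanishes only at
`λ = 1`, so for `0 < θ < 1` the function `Φ_θ` is a nonzero multiple of `g`, and `p_θ > 1`. -/

theorem differentiableOn_one_sub_div_one_add :
    DifferentiableOn ℂ (fun l : ℂ => (1 - l) / (1 + l)) {-1}ᶜ := by
  refine ((differentiableOn_const 1).sub differentiableOn_id).div
    ((differentiableOn_const 1).add differentiableOn_id) fun l hl => ?_
  rw [add_comm, ← sub_neg_eq_add]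
  exact sub_ne_zero.2 hl

theorem ne_neg_one_of_neg_one_lt_re {l : ℂ} (hl : -1 < l.re) : l ≠ -1 := by
  rintro rfl
  norm_num at hl

theorem norm_one_sub_le_norm_one_add {l : ℂ} (hl : 0 ≤ l.re) : ‖1 - l‖ ≤ ‖1 + l‖ := by
  refine (sq_le_sq₀ (norm_nonneg _) (norm_nonneg _)).1 ?_
  rw [Complex.sq_norm, Complex.sq_norm, normSq_apply, normSq_apply]
  simp only [sub_re, add_re, sub_im, add_im, one_re, one_im]
  nlinarith

theorem norm_one_sub_div_one_add_le_one {l : ℂ} (hl : 0 ≤ l.re) :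
    ‖(1 - l) / (1 + l)‖ ≤ 1 := by
  rw [norm_div]
  exact div_le_one_of_le₀ (norm_one_sub_le_norm_one_add hl) (norm_nonneg _)

theorem one_lt_ofReal_one_div_one_sub {θ : ℝ} (h0 : 0 < θ) (h1 : θ < 1) :
    1 < ENNReal.ofReal (1 / (1 - θ)) := by
  rw [ENNReal.one_lt_ofReal, one_lt_div (by linarith)]
  linarith

section LpSeminorm

variable {α 𝕜 E : Type*} [MeasurableSpace α] {μ : Measure α} {p : ℝ≥0∞}

theorem eLpNorm_const_mul [NormedField 𝕜] (c : 𝕜) (f : α → 𝕜) :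
    eLpNorm (fun x => c * f x) p μ = ‖c‖ₑ * eLpNorm f p μ :=
  eLpNorm_const_smul c f p μ

theorem eLpNorm_eq_top_of_not_memLp [NormedAddCommGroup E] {f : α → E}
    (hf : AEStronglyMeasurable f μ) (h : ¬MemLp f p μ) : eLpNorm f p μ = ⊤ :=
  not_lt_top_iff.1 fun hlt => h ⟨hf, hlt⟩

end LpSeminorm

/-- Counterexample to interpolation without the non-vanishing condition: for
`g ∈ L¹ \ ⋃_{p>1} L^p`, the family `Φ_λ = ((1−λ)/(1+λ))·g` is analytic on the right
half-plane, `‖Φ₁‖_∞ = 0`, `‖Φ_λ‖₁ ≤ ‖g‖₁ < ∞`, yet for each `0 < θ < 1` the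
interpolated norm `‖Φ_θ‖_{p_θ}` with `1/p_θ = 1−θ` (i.e. `p_θ = 1/(1−θ) > 1`)
is infinite. -/
theorem interpolation_counterexample_vanishing
    {α : Type*} [MeasurableSpace α] (μ : Measure α)
    (g : α → ℂ) (hg : MemLp g 1 μ)
    (hgnot : ∀ p : ℝ≥0∞, 1 < p → ¬ MemLp g p μ) :
    (∀ x : α, DifferentiableOn ℂ (fun l : ℂ => ((1 - l) / (1 + l)) * g x)
      {l : ℂ | 0 < l.re}) ∧
    eLpNorm (fun x => ((1 - (1 : ℂ)) / (1 + (1 : ℂ))) * g x) ⊤ μ = 0 ∧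
    (∀ l : ℂ, 0 < l.re →
      eLpNorm (fun x => ((1 - l) / (1 + l)) * g x) 1 μ ≤ eLpNorm g 1 μ) ∧
    eLpNorm g 1 μ < ⊤ ∧
    (∀ θ : ℝ, 0 < θ → θ < 1 →
      eLpNorm (fun x => ((1 - (θ : ℂ)) / (1 + (θ : ℂ))) * g x)
        (ENNReal.ofReal (1 / (1 - θ))) μ = ⊤) := by
  refine ⟨fun x => ?_, by simp [← Pi.zero_def], fun l hl => ?_, hg.2, fun θ h0 h1 => ?_⟩
  · exact (differentiableOn_one_sub_div_one_add.mono
      fun l (hl : 0 < l.re) => ne_neg_one_of_neg_one_lt_re (by linarith)).mul_const (g x)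
  · refine eLpNorm_mono fun x => ?_
    rw [norm_mul]
    exact mul_le_of_le_one_left (norm_nonneg _) (norm_one_sub_div_one_add_le_one hl.le)
  · have hc : (1 - (θ : ℂ)) / (1 + θ) ≠ 0 :=
      div_ne_zero (by exact_mod_cast (sub_pos.2 h1).ne')
        (by exact_mod_cast (by linarith : 1 + θ ≠ 0))
    rw [eLpNorm_const_mul,
      eLpNorm_eq_top_of_not_memLp hg.1 (hgnot _ (one_lt_ofReal_one_div_one_sub h0 h1))]
    exact ENNReal.mul_top (enorm_ne_zero.2 hc)
end

section
/- The functional F(A) = (1 + log|A|²)·det A − |A|² on 2×2 real matrices (restricted to matrices with |A| > 0) is rank-one concave: for any matrix A and any rank-one matrix X, the function t ↦ F(A + tX) is concave on any interval where A + tX ≠ 0. -/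
/-- The functional `F(A) = (1 + log|A|²)·det A − |A|²`. -/
noncomputable def Ffun (A : Matrix (Fin 2) (Fin 2) ℝ) : ℝ :=
  (1 + Real.log (opNorm A ^ 2)) * A.det - opNorm A ^ 2

open Set Filter Topology

section Profile

open Real

noncomputable def Fprofile (p q : ℝ) : ℝ :=
  (p ^ 2 - q ^ 2) * (1 + log ((p + q) ^ 2)) - (p + q) ^ 2

theorem continuous_Fprofile : Continuous (Function.uncurry Fprofile) := by
  have h : Function.uncurry Fprofile = fun x : ℝ × ℝ =>
      (x.1 - x.2) * (x.1 + x.2) + 2 * (x.1 - x.2) * ((x.1 + x.2) * log (x.1 + x.2))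
        - (x.1 + x.2) ^ 2 := by
    ext ⟨p, q⟩
    simp only [Function.uncurry_apply_pair, Fprofile, log_pow]
    push_cast
    ring
  rw [h]
  have := continuous_mul_log.comp (continuous_fst.add continuous_snd)
  fun_prop

theorem hasDerivAt_Fprofile {p q : ℝ → ℝ} {p' q' t : ℝ} (hp : HasDerivAt p p' t)
    (hq : HasDerivAt q q' t) (hs : 0 < p t + q t) :
    HasDerivAt (fun t => Fprofile (p t) (q t))
      ((2 * p t * p' - 2 * q t * q') * (1 + log ((p t + q t) ^ 2)) - 4 * q t * (p' + q')) t := by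
  have hsq := (hp.fun_add hq).fun_pow 2
  have := ((hp.fun_pow 2).fun_sub (hq.fun_pow 2)).fun_mul
    ((hsq.log (by positivity)).const_add 1) |>.fun_sub hsq
  refine this.congr_deriv ?_
  have : p t + q t ≠ 0 := hs.ne'
  field_simp
  ring

/-- The hypotheses on `p'` say `p p'' + p'² = c`, i.e. `(p²)'' = 2c`, and likewise for `q`. -/
theorem concaveOn_Fprofile_of_ode {p q p' q' : ℝ → ℝ} {c : ℝ}
    (hp : ∀ t, HasDerivAt p (p' t) t) (hp' : ∀ t, HasDerivAt p' ((c - p' t ^ 2) / p t) t)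
    (hq : ∀ t, HasDerivAt q (q' t) t) (hq' : ∀ t, HasDerivAt q' ((c - q' t ^ 2) / q t) t)
    (hp0 : ∀ t, 0 < p t) (hq0 : ∀ t, 0 < q t) (hpc : ∀ t, p' t ^ 2 ≤ c) :
    ConcaveOn ℝ univ (fun t => Fprofile (p t) (q t)) := by
  have hs : ∀ t, 0 < p t + q t := fun t => add_pos (hp0 t) (hq0 t)
  have hF := fun t => hasDerivAt_Fprofile (hp t) (hq t) (hs t)
  refine concaveOn_of_hasDerivWithinAt2_nonpos convex_univ
    (fun t _ => (hF t).continuousAt.continuousWithinAt) (fun t _ => (hF t).hasDerivWithinAt)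
    (f'' := fun t => -(4 * (p t + q t) * ((c - p' t ^ 2) / p t)
      + 4 * q t * (p' t + q' t) ^ 2 / (p t + q t))) (fun t _ => ?_) (fun t _ => ?_)
  · have hsq := ((hp t).fun_add (hq t)).fun_pow 2
    have := (((((hp t).const_mul 2).fun_mul (hp' t)).fun_sub
      (((hq t).const_mul 2).fun_mul (hq' t))).fun_mul
      ((hsq.log (pow_pos (hs t) 2).ne').const_add 1)).fun_sub
        (((hq t).const_mul 4).fun_mul ((hp' t).fun_add (hq' t)))
    refine (this.congr_deriv ?_).hasDerivWithinAt
    have := hp0 t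
    have := hq0 t
    field_simp
    ring
  · have hp'' : 0 ≤ (c - p' t ^ 2) / p t := div_nonneg (sub_nonneg.2 (hpc t)) (hp0 t).le
    have := hq0 t
    have := hs t
    simp only [neg_nonpos]
    positivity

end Profile

section SmoothedNorm

variable {E : Type*} [NormedAddCommGroup E] [InnerProductSpace ℝ E]

theorem hasDerivAt_sqrt_norm_sq_add {a α : E} {ε : ℝ} (hε : 0 < ε) (t : ℝ) :
    HasDerivAt (fun t : ℝ => √(‖a + t • α‖ ^ 2 + ε))
      (inner ℝ (a + t • α) α / √(‖a + t • α‖ ^ 2 + ε)) t := by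
  have hline : HasDerivAt (fun t : ℝ => a + t • α) α t := by
    simpa using ((hasDerivAt_id t).smul_const α).const_add a
  refine ((hline.norm_sq.add_const ε).sqrt (by positivity)).congr_deriv ?_
  field_simp

theorem hasDerivAt_inner_div_sqrt_norm_sq_add {a α : E} {ε : ℝ} (hε : 0 < ε) (t : ℝ) :
    HasDerivAt (fun t : ℝ => inner ℝ (a + t • α) α / √(‖a + t • α‖ ^ 2 + ε))
      ((‖α‖ ^ 2 - (inner ℝ (a + t • α) α / √(‖a + t • α‖ ^ 2 + ε)) ^ 2)
        / √(‖a + t • α‖ ^ 2 + ε)) t := by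
  have hline : HasDerivAt (fun t : ℝ => a + t • α) α t := by
    simpa using ((hasDerivAt_id t).smul_const α).const_add a
  have hinner := hline.inner ℝ (hasDerivAt_const t α)
  refine (hinner.div (hasDerivAt_sqrt_norm_sq_add hε t) (by positivity)).congr_deriv ?_
  have : 0 < √(‖a + t • α‖ ^ 2 + ε) := by positivity
  rw [inner_zero_right, zero_add, real_inner_self_eq_norm_sq]
  field_simp

theorem sq_inner_div_sqrt_norm_sq_add_le (x α : E) {ε : ℝ} (hε : 0 < ε) :
    (inner ℝ x α / √(‖x‖ ^ 2 + ε)) ^ 2 ≤ ‖α‖ ^ 2 := by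
  rw [div_pow, Real.sq_sqrt (by positivity), div_le_iff₀ (by positivity)]
  have h := abs_real_inner_le_norm x α
  have : inner ℝ x α ^ 2 ≤ (‖x‖ * ‖α‖) ^ 2 := sq_le_sq' (abs_le.1 h).1 (abs_le.1 h).2
  nlinarith [sq_nonneg ‖α‖]

theorem concaveOn_Fprofile_sqrt_norm_sq_add {a α b β : E} (hαβ : ‖α‖ = ‖β‖) {ε : ℝ}
    (hε : 0 < ε) :
    ConcaveOn ℝ univ (fun t : ℝ => Fprofile √(‖a + t • α‖ ^ 2 + ε) √(‖b + t • β‖ ^ 2 + ε)) :=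
  concaveOn_Fprofile_of_ode (hasDerivAt_sqrt_norm_sq_add hε)
    (hasDerivAt_inner_div_sqrt_norm_sq_add hε) (hasDerivAt_sqrt_norm_sq_add hε)
    (hαβ ▸ hasDerivAt_inner_div_sqrt_norm_sq_add hε) (fun _ => by positivity)
    (fun _ => by positivity) (fun _ => sq_inner_div_sqrt_norm_sq_add_le _ _ hε)

theorem concaveOn_Fprofile_norm_add_smul {a α b β : E} (hαβ : ‖α‖ = ‖β‖) :
    ConcaveOn ℝ univ (fun t : ℝ => Fprofile ‖a + t • α‖ ‖b + t • β‖) := by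
  change _ ∈ {f : ℝ → ℝ | ConcaveOn ℝ univ f}
  refine isClosed_setOfPred_concaveOn.mem_of_tendsto (b := 𝓝[>] (0 : ℝ))
    (tendsto_pi_nhds.2 fun t => ?_) (eventually_nhdsWithin_of_forall fun ε hε =>
      concaveOn_Fprofile_sqrt_norm_sq_add (a := a) (b := b) hαβ hε)
  have hcont : Continuous fun ε : ℝ =>
      Fprofile √(‖a + t • α‖ ^ 2 + ε) √(‖b + t • β‖ ^ 2 + ε) :=
    continuous_Fprofile.comp (by fun_prop : Continuous fun ε : ℝ =>
      (√(‖a + t • α‖ ^ 2 + ε), √(‖b + t • β‖ ^ 2 + ε)))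
  simpa using (hcont.tendsto 0).mono_left nhdsWithin_le_nhds

end SmoothedNorm

section ComplexCoordinates

open Complex ComplexConjugate

theorem exists_norm_eq_one_norm_mul_add_mul_conj (a b : ℂ) :
    ∃ c : ℂ, ‖c‖ = 1 ∧ ‖a * c + b * conj c‖ = ‖a‖ + ‖b‖ := by
  set θ : ℝ := (arg b - arg a) / 2
  set φ : ℝ := (arg a + arg b) / 2
  have ha : exp (arg a * I) * exp (θ * I) = exp (φ * I) := by
    rw [← exp_add]; congr 1; push_cast [θ, φ]; ring
  have hb : exp (arg b * I) * conj (exp (θ * I)) = exp (φ * I) := by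
    rw [← exp_conj, map_mul, conj_ofReal, conj_I, ← exp_add]; congr 1; push_cast [θ, φ]; ring
  refine ⟨exp (θ * I), norm_exp_ofReal_mul_I θ, ?_⟩
  calc ‖a * exp (θ * I) + b * conj (exp (θ * I))‖
      = ‖‖a‖ * (exp (arg a * I) * exp (θ * I)) + ‖b‖ * (exp (arg b * I) * conj (exp (θ * I)))‖ := by
        rw [← mul_assoc, ← mul_assoc, norm_mul_exp_arg_mul_I, norm_mul_exp_arg_mul_I]
    _ = ‖a‖ + ‖b‖ := by
        rw [ha, hb, ← add_mul, norm_mul, norm_exp_ofReal_mul_I, mul_one]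
        exact_mod_cast Real.norm_of_nonneg (by positivity)

noncomputable def partialZ (M : Matrix (Fin 2) (Fin 2) ℝ) : ℂ :=
  ⟨(M 0 0 + M 1 1) / 2, (M 1 0 - M 0 1) / 2⟩

noncomputable def partialZbar (M : Matrix (Fin 2) (Fin 2) ℝ) : ℂ :=
  ⟨(M 0 0 - M 1 1) / 2, (M 1 0 + M 0 1) / 2⟩

theorem repr_symm_toEuclideanLin (M : Matrix (Fin 2) (Fin 2) ℝ) (v : EuclideanSpace ℝ (Fin 2)) :
    orthonormalBasisOneI.repr.symm (M.toEuclideanLin v) =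
      partialZ M * orthonormalBasisOneI.repr.symm v
        + partialZbar M * conj (orthonormalBasisOneI.repr.symm v) := by
  apply Complex.ext <;>
    simp [orthonormalBasisOneI_repr_symm_apply, Matrix.toLpLin_apply, partialZ, partialZbar] <;>
    ring

theorem opNorm_eq_norm_add_norm (M : Matrix (Fin 2) (Fin 2) ℝ) :
    opNorm M = ‖partialZ M‖ + ‖partialZbar M‖ := by
  set e := orthonormalBasisOneI.repr
  have hT : ∀ v, ‖M.toEuclideanLin.toContinuousLinearMap v‖
      = ‖partialZ M * e.symm v + partialZbar M * conj (e.symm v)‖ := fun v => by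
    rw [← repr_symm_toEuclideanLin, LinearIsometryEquiv.norm_map]
    rfl
  apply le_antisymm
  · refine ContinuousLinearMap.opNorm_le_bound _ (by positivity) fun v => ?_
    rw [hT, ← e.symm.norm_map v]
    refine (norm_add_le _ _).trans_eq ?_
    rw [norm_mul, norm_mul, Complex.norm_conj]
    ring
  · obtain ⟨c, hc, hnorm⟩ := exists_norm_eq_one_norm_mul_add_mul_conj (partialZ M) (partialZbar M)
    have := M.toEuclideanLin.toContinuousLinearMap.le_opNorm (e c)
    rwa [hT, e.symm_apply_apply, hnorm, e.norm_map, hc, mul_one] at this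

theorem det_eq_norm_partialZ_sq_sub (M : Matrix (Fin 2) (Fin 2) ℝ) :
    M.det = ‖partialZ M‖ ^ 2 - ‖partialZbar M‖ ^ 2 := by
  rw [Matrix.det_fin_two, Complex.sq_norm, Complex.sq_norm, normSq_mk, normSq_mk]
  simp only [partialZ, partialZbar]
  ring

theorem partialZ_add_smul (A X : Matrix (Fin 2) (Fin 2) ℝ) (t : ℝ) :
    partialZ (A + t • X) = partialZ A + t • partialZ X := by
  apply Complex.ext <;> simp [partialZ] <;> ring

theorem partialZbar_add_smul (A X : Matrix (Fin 2) (Fin 2) ℝ) (t : ℝ) :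
    partialZbar (A + t • X) = partialZbar A + t • partialZbar X := by
  apply Complex.ext <;> simp [partialZbar] <;> ring

end ComplexCoordinates

theorem Ffun_eq_Fprofile (M : Matrix (Fin 2) (Fin 2) ℝ) :
    Ffun M = Fprofile ‖partialZ M‖ ‖partialZbar M‖ := by
  rw [Ffun, Fprofile, opNorm_eq_norm_add_norm, det_eq_norm_partialZ_sq_sub, mul_comm]

theorem norm_partialZ_eq_norm_partialZbar_of_det_eq_zero {M : Matrix (Fin 2) (Fin 2) ℝ}
    (h : M.det = 0) : ‖partialZ M‖ = ‖partialZbar M‖ :=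
  (sq_eq_sq₀ (norm_nonneg _) (norm_nonneg _)).1 <| by
    linarith [det_eq_norm_partialZ_sq_sub M]

theorem Matrix.det_eq_zero_of_rank_lt {n R : Type*} [Fintype n] [DecidableEq n] [CommRing R]
    [IsDomain R] {M : Matrix n n R} (h : M.rank < Fintype.card n) : M.det = 0 := by
  by_contra hdet
  exact h.ne (Matrix.rank_of_det_ne_zero hdet)

theorem Ffun_rank_one_concave_general
    (A X : Matrix (Fin 2) (Fin 2) ℝ) (hX : X.rank = 1)
    (S : Set ℝ) (hS : Convex ℝ S) :
    ConcaveOn ℝ S (fun t => Ffun (A + t • X)) := by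
  have hdet : X.det = 0 := Matrix.det_eq_zero_of_rank_lt (by simp [hX])
  have hαβ := norm_partialZ_eq_norm_partialZbar_of_det_eq_zero hdet
  simp only [Ffun_eq_Fprofile, partialZ_add_smul, partialZbar_add_smul]
  exact (concaveOn_Fprofile_norm_add_smul hαβ).subset (subset_univ S) hS

/-- **Rank-one concavity** of `F(A) = (1 + log|A|²)·det A − |A|²`: for every matrix
`A` and every rank-one matrix `X`, the map `t ↦ F(A + tX)` is concave on any interval
(indeed any convex set) of parameters `t` where `A + tX ≠ 0`. -/
theorem Ffun_rank_one_concave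
    (A X : Matrix (Fin 2) (Fin 2) ℝ) (hX : X.rank = 1)
    (S : Set ℝ) (hS : Convex ℝ S) (hne : ∀ t ∈ S, A + t • X ≠ 0) :
    ConcaveOn ℝ S (fun t => Ffun (A + t • X)) :=
  Ffun_rank_one_concave_general A X hX S hS
end

section
/- Radial equality case in exponential integrability: let α : (0,1) → [0,1] be measurable with ∫₀¹ (1−α(t))/t dt = ∞, and define μ(z) = −(z/z̄)α(|z|) for |z| < 1, μ = 0 for |z| ≥ 1. Then with Sμ(z) = 2∫_{|z|}^1 α(t)/t dt − α(|z|) for |z| < 1, one has ∫_𝔻 (1−|μ(z)|)·e^{|μ(z)| + Re Sμ(z)} dz = π. -/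
/-!
In polar coordinates the integral becomes `2π ∫₀¹ r (1 - α(r)) e^{2J(r)} dr` with
`J(r) = ∫_r^1 α(t)/t dt`. Since `J(r) = -log r - K(r)` where `K(r) = ∫_r^1 (1 - α(t))/t dt`, the
integrand equals `½ w(r) e^{-∫_r^1 w}` for `w(t) = 2(1 - α(t))/t`, i.e. half the derivative of
`e^{-∫_r^1 w}`. The primitive of `w` is absolutely continuous on every `[c, 1]`, `c > 0`, so the
integral over `(c, 1)` is `1 - e^{-∫_c^1 w}`, which tends to `1` as `c → 0` because `∫_0^1 w = ∞`.
-/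

open MeasureTheory Complex Set Filter Topology Module

theorem LipschitzOnWith.comp_absolutelyContinuousOnInterval {X Y : Type*}
    [PseudoMetricSpace X] [PseudoMetricSpace Y] {f : ℝ → X} {g : X → Y} {K : NNReal} {s : Set X}
    {a b : ℝ} (hg : LipschitzOnWith K g s) (hf : AbsolutelyContinuousOnInterval f a b)
    (hfs : MapsTo f (uIcc a b) s) : AbsolutelyContinuousOnInterval (g ∘ f) a b := by
  have hK := Tendsto.const_mul (K : ℝ) hf
  rw [mul_zero] at hK
  refine squeeze_zero' (Eventually.of_forall fun _ ↦ Finset.sum_nonneg fun _ _ ↦ dist_nonneg)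
    ?_ hK
  filter_upwards [mem_inf_of_right (mem_principal_self _)] with E hE
  rw [Finset.mul_sum]
  exact Finset.sum_le_sum fun i hi ↦
    hg.dist_le_mul _ (hfs (hE.1 i hi).1) _ (hfs (hE.1 i hi).2)

theorem LocallyLipschitz.comp_absolutelyContinuousOnInterval {F Y : Type*}
    [SeminormedAddCommGroup F] [PseudoMetricSpace Y] {f : ℝ → F} {g : F → Y} {a b : ℝ}
    (hg : LocallyLipschitz g) (hf : AbsolutelyContinuousOnInterval f a b) :
    AbsolutelyContinuousOnInterval (g ∘ f) a b := by
  obtain ⟨K, hK⟩ := LocallyLipschitzOn.exists_lipschitzOnWith_of_compact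
    (isCompact_uIcc.image_of_continuousOn hf.continuousOn) hg.locallyLipschitzOn
  exact hK.comp_absolutelyContinuousOnInterval hf (mapsTo_image f _)

theorem AbsolutelyContinuousOnInterval.integral_deriv_comp_mul_deriv {f g : ℝ → ℝ} {a b : ℝ}
    (hf : AbsolutelyContinuousOnInterval f a b) (hg : ContDiff ℝ 1 g) :
    ∫ x in a..b, deriv g (f x) * deriv f x = g (f b) - g (f a) := by
  refine Eq.trans ?_
    (hg.locallyLipschitz.comp_absolutelyContinuousOnInterval hf).integral_deriv_eq_sub
  refine intervalIntegral.integral_congr_ae ?_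
  filter_upwards [hf.ae_differentiableAt] with x hx hxab
  exact ((hg.differentiable one_ne_zero (f x)).hasDerivAt.comp x
    (hx (uIoc_subset_uIcc hxab)).hasDerivAt).deriv.symm

theorem integral_mul_exp_neg_integral {w : ℝ → ℝ} {c b : ℝ}
    (hw : IntervalIntegrable w volume c b) :
    ∫ r in c..b, w r * Real.exp (-∫ t in r..b, w t) = 1 - Real.exp (-∫ t in c..b, w t) := by
  have hFTC := (hw.absolutelyContinuousOnInterval_intervalIntegral
    right_mem_uIcc).integral_deriv_comp_mul_deriv Real.contDiff_exp
  simp only [intervalIntegral.integral_same, Real.exp_zero, Real.deriv_exp] at hFTC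
  rw [← intervalIntegral.integral_symm, ← hFTC]
  refine intervalIntegral.integral_congr_ae ?_
  filter_upwards [hw.ae_hasDerivAt_integral] with x hx hxcb
  rw [(hx (uIoc_subset_uIcc hxcb) b right_mem_uIcc).deriv, intervalIntegral.integral_symm x,
    mul_comm]

theorem integral_Ioo_mul_exp_neg_integral_eq_one {w : ℝ → ℝ} {a b : ℝ} (hab : a < b)
    (hw0 : ∀ t ∈ Ioo a b, 0 ≤ w t) (hwi : ∀ c ∈ Ioo a b, IntervalIntegrable w volume c b)
    (hdiv : ∫⁻ t in Ioo a b, ENNReal.ofReal (w t) = ⊤) :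
    ∫ r in Ioo a b, w r * Real.exp (-∫ t in r..b, w t) = 1 := by
  obtain ⟨u, hu_anti, hu, hu_lim⟩ := exists_seq_strictAnti_tendsto' hab
  have hcover : AECover (volume.restrict (Ioo a b)) atTop (fun n ↦ Ioo (u n) b) :=
    aecover_Ioo_of_Ioo hu_lim tendsto_const_nhds
  have hrestrict (n : ℕ) :
      (volume.restrict (Ioo a b)).restrict (Ioo (u n) b) = volume.restrict (Ioo (u n) b) := by
    rw [Measure.restrict_restrict measurableSet_Ioo,
      inter_eq_left.mpr (Ioo_subset_Ioo_left (hu n).1.le)]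
  have hintegral (n : ℕ) (g : ℝ → ℝ) :
      ∫ x in Ioo (u n) b, g x ∂volume.restrict (Ioo a b) = ∫ x in u n..b, g x := by
    rw [hrestrict, intervalIntegral.integral_of_le (hu n).2.le, integral_Ioc_eq_integral_Ioo]
  have hintegrable (n : ℕ) {g : ℝ → ℝ} (hg : IntervalIntegrable g volume (u n) b) :
      IntegrableOn g (Ioo (u n) b) (volume.restrict (Ioo a b)) := by
    rw [IntegrableOn, hrestrict]
    exact (intervalIntegrable_iff_integrableOn_Ioo_of_le (hu n).2.le).mp hg
  have hw_ae : 0 ≤ᵐ[volume.restrict (Ioo a b)] w :=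
    ae_restrict_of_forall_mem measurableSet_Ioo hw0
  -- If the partial integrals of `w` stayed bounded, `w` would be integrable on `(a, b)`.
  have hw_top : Tendsto (fun n ↦ ∫ t in u n..b, w t) atTop atTop := by
    refine tendsto_atTop_atTop_of_monotone' (fun m n hmn ↦ ?_) ?_
    · rw [← hintegral, ← hintegral]
      exact setIntegral_mono_set (hintegrable n (hwi _ (hu n))) (ae_restrict_of_ae hw_ae)
        (Ioo_subset_Ioo_left (hu_anti.antitone hmn)).eventuallyLE
    · rintro ⟨I, hI⟩
      have hw_int := hcover.integrable_of_integral_bounded_of_nonneg_ae I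
        (fun n ↦ hintegrable n (hwi _ (hu n))) hw_ae
        (Eventually.of_forall fun n ↦ (hintegral n w).trans_le (hI (mem_range_self n)))
      exact hw_int.lintegral_lt_top.ne hdiv
  have hintegrand (c : ℝ) (hc : c ∈ Ioo a b) :
      IntervalIntegrable (fun r ↦ w r * Real.exp (-∫ t in r..b, w t)) volume c b :=
    (hwi c hc).mul_continuousOn (intervalIntegral.continuousOn_primitive_interval_left
      ((intervalIntegrable_iff').mp (hwi c hc))).neg.rexp
  refine hcover.integral_eq_of_tendsto_of_nonneg_ae 1 ?_
    (fun n ↦ hintegrable n (hintegrand _ (hu n))) ?_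
  · filter_upwards [hw_ae] with r hr using mul_nonneg hr (Real.exp_pos _).le
  · simp only [hintegral, integral_mul_exp_neg_integral (hwi _ (hu _))]
    simpa using (Real.tendsto_exp_neg_atTop_nhds_zero.comp hw_top).const_sub 1

theorem setIntegral_ball_fun_norm_addHaar {E F : Type*} [NormedAddCommGroup E]
    [NormedSpace ℝ E] [Nontrivial E] [FiniteDimensional ℝ E] [MeasurableSpace E] [BorelSpace E]
    [NormedAddCommGroup F] [NormedSpace ℝ F] (μ : Measure E) [μ.IsAddHaarMeasure]
    (f : ℝ → F) (r : ℝ) :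
    ∫ x in Metric.ball (0 : E) r, f ‖x‖ ∂μ =
      finrank ℝ E • μ.real (Metric.ball 0 1) • ∫ y in Ioo 0 r, y ^ (finrank ℝ E - 1) • f y := by
  have hball : ∫ x in Metric.ball (0 : E) r, f ‖x‖ ∂μ = ∫ x, (Iio r).indicator f ‖x‖ ∂μ := by
    rw [← integral_indicator measurableSet_ball]
    congr with x
    simp [indicator]
  rw [hball, integral_fun_norm_addHaar]
  simp_rw [← fun y ↦ indicator_smul_apply (Iio r) (· ^ (finrank ℝ E - 1)) f y]
  rw [integral_indicator measurableSet_Iio, Measure.restrict_restrict measurableSet_Iio,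
    Iio_inter_Ioi]

theorem Complex.setIntegral_ball_fun_norm {F : Type*} [NormedAddCommGroup F] [NormedSpace ℝ F]
    (f : ℝ → F) (r : ℝ) :
    ∫ z in Metric.ball (0 : ℂ) r, f ‖z‖ = (2 * Real.pi) • ∫ y in Ioo 0 r, y • f y := by
  rw [setIntegral_ball_fun_norm_addHaar]
  simp [Measure.real, mul_smul, ofNat_smul_eq_nsmul]

theorem IntervalIntegrable.div_id {f : ℝ → ℝ} {a b : ℝ} (hf : IntervalIntegrable f volume a b)
    (ha : 0 < a) (hb : 0 < b) : IntervalIntegrable (fun t ↦ f t / t) volume a b := by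
  simp_rw [div_eq_mul_inv]
  exact hf.mul_continuousOn <| continuousOn_inv₀.mono fun t ht ↦
    (lt_of_lt_of_le (lt_inf_iff.mpr ⟨ha, hb⟩) ht.1).ne'

theorem integral_div_add_integral_one_sub_div {β : ℝ → ℝ} {r : ℝ} (hr : 0 < r)
    (hβ : IntervalIntegrable (fun t ↦ β t / t) volume r 1) :
    (∫ t in r..1, β t / t) + ∫ t in r..1, (1 - β t) / t = -Real.log r := by
  have hinv : IntervalIntegrable (fun t : ℝ ↦ t⁻¹) volume r 1 :=
    intervalIntegral.intervalIntegrable_inv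
      (fun t ht ↦ (lt_of_lt_of_le (lt_inf_iff.mpr ⟨hr, one_pos⟩) ht.1).ne') continuousOn_id
  have hsub : ∫ t in r..1, (1 - β t) / t = (∫ t in r..1, t⁻¹) - ∫ t in r..1, β t / t := by
    simp_rw [← intervalIntegral.integral_sub hinv hβ, sub_div, one_div]
  rw [hsub, integral_inv_of_pos hr one_pos, Real.log_div one_ne_zero hr.ne', Real.log_one]
  ring

theorem mul_exp_two_mul_integral_div {β : ℝ → ℝ} {r : ℝ} (hr : 0 < r)
    (hβ : IntervalIntegrable (fun t ↦ β t / t) volume r 1) :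
    r * Real.exp (2 * ∫ t in r..1, β t / t) =
      r⁻¹ * Real.exp (-∫ t in r..1, 2 * ((1 - β t) / t)) := by
  rw [intervalIntegral.integral_const_mul,
    show 2 * ∫ t in r..1, β t / t = -(2 * ∫ t in r..1, (1 - β t) / t) - (Real.log r + Real.log r) by
      linarith [integral_div_add_integral_one_sub_div hr hβ],
    Real.exp_sub, Real.exp_add, Real.exp_log hr]
  field_simp

/-- **Radial equality case in exponential integrability**: let `α : (0,1) → [0,1]`
be measurable with `∫₀¹ (1−α(t))/t dt = ∞`, and set `μ(z) = −(z/z̄)α(|z|)` on `𝔻`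
(so `|μ(z)| = α(|z|)`). With the Beurling transform given on `𝔻` by
`Sμ(z) = 2∫_{|z|}^1 α(t)/t dt − α(|z|)`, one has
`∫_𝔻 (1−|μ|)·e^{|μ| + Re Sμ} dz = π`. -/
theorem radial_equality_exponential
    (α : ℝ → ℝ) (hmeas : Measurable α)
    (hrange : ∀ t : ℝ, α t ∈ Icc (0 : ℝ) 1)
    (hdiv : ∫⁻ t in Ioo (0 : ℝ) 1, ENNReal.ofReal ((1 - α t) / t) = ⊤) :
    (∫ z in Metric.ball (0 : ℂ) 1,
        (1 - α (‖z‖)) *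
          Real.exp (α (‖z‖) +
            ((2 * ∫ t in Ioo (‖z‖) 1, α t / t) - α (‖z‖)))) =
      Real.pi := by
  set w : ℝ → ℝ := fun t ↦ 2 * ((1 - α t) / t) with hw
  have hα_int (c d : ℝ) : IntervalIntegrable α volume c d :=
    intervalIntegrable_iff.mpr <| Measure.integrableOn_of_bounded (M := 1)
      measure_Ioc_lt_top.ne hmeas.aestronglyMeasurable <| ae_of_all _ fun t ↦
        abs_le.mpr ⟨by linarith [(hrange t).1], (hrange t).2⟩
  have hw_int (c : ℝ) (hc : c ∈ Ioo (0 : ℝ) 1) : IntervalIntegrable w volume c 1 :=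
    ((intervalIntegrable_const.sub (hα_int c 1)).div_id hc.1 one_pos).const_mul 2
  have hw_nonneg (t : ℝ) (ht : t ∈ Ioo (0 : ℝ) 1) : 0 ≤ w t :=
    mul_nonneg zero_le_two (div_nonneg (sub_nonneg.mpr (hrange t).2) ht.1.le)
  have hw_div : ∫⁻ t in Ioo 0 1, ENNReal.ofReal (w t) = ⊤ := by
    simp_rw [hw, ENNReal.ofReal_mul zero_le_two]
    rw [lintegral_const_mul' _ _ ENNReal.ofReal_ne_top, hdiv]
    simp
  have hradial (r : ℝ) (hr : r ∈ Ioo (0 : ℝ) 1) :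
      r • ((1 - α r) * Real.exp (α r + ((2 * ∫ t in Ioo r 1, α t / t) - α r))) =
        2⁻¹ * (w r * Real.exp (-∫ t in r..1, w t)) := by
    rw [add_sub_cancel, ← integral_Ioc_eq_integral_Ioo, ← intervalIntegral.integral_of_le hr.2.le,
      smul_eq_mul, mul_left_comm,
      mul_exp_two_mul_integral_div hr.1 ((hα_int r 1).div_id hr.1 one_pos)]
    ring
  rw [Complex.setIntegral_ball_fun_norm
      (fun r ↦ (1 - α r) * Real.exp (α r + ((2 * ∫ t in Ioo r 1, α t / t) - α r))) 1,
    setIntegral_congr_fun measurableSet_Ioo hradial, integral_const_mul,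
    integral_Ioo_mul_exp_neg_integral_eq_one one_pos hw_nonneg hw_int hw_div, smul_eq_mul]
  ring
end
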